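/- arXiv:math/0404507 — 2 statements merged into one kernel-verified Lean document; each statement's English description precedes it below -/
import Mathlib

section
/- Let 𝔏 be a Lie conformal algebra over a field k of characteristic zero, generated by a subset 𝒢 with weight function wt : 𝒢 → ℕ, with filtrations 𝔏'_i and 𝔏_i. Assume there is r ∈ ℕ such that every monomial in 𝒢 of weight ≥ r is zero. Then 𝔏_r is contained in the center of 𝔏, i.e., for every a ∈ 𝔏_r, b ∈ 𝔏 and n ∈ ℕ one has a[n]b = 0. -/
open Finset

/-- A (bundled) conformal algebra over a field `𝕜`. -/
structure ConfAlg (𝕜 : Type) [Field 𝕜] where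
  A : Type
  [ag : AddCommGroup A]
  [mo : Module 𝕜 A]
  mul : ℕ → A →ₗ[𝕜] A →ₗ[𝕜] A
  D : A →ₗ[𝕜] A
  dmul_zero : ∀ a b : A, mul 0 (D a) b = 0
  dmul_succ : ∀ (n : ℕ) (a b : A), mul (n + 1) (D a) b = (-(n + 1 : 𝕜)) • mul n a b
  leibniz : ∀ (n : ℕ) (a b : A), D (mul n a b) = mul n (D a) b + mul n a (D b)
  loc : ∀ a b : A, ∃ N : ℕ, ∀ n : ℕ, N ≤ n → mul n a b = 0

attribute [instance] ConfAlg.ag ConfAlg.mo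

variable {𝕜 : Type} [Field 𝕜]

/-- Divided power of the derivation: `D^{(s)} = D^s / s!`. -/
noncomputable def ConfAlg.dpow (C : ConfAlg 𝕜) (s : ℕ) (a : C.A) : C.A :=
  (s.factorial : 𝕜)⁻¹ • (C.D ^ s) a

/-- Conformal associativity. -/
def ConfAlg.IsAssoc (C : ConfAlg 𝕜) : Prop :=
  ∀ (a b c : C.A) (m n : ℕ),
    C.mul n (C.mul m a b) c =
      ∑ s ∈ Finset.range (m + 1), ((-1 : 𝕜) ^ s * (m.choose s : 𝕜)) •
        C.mul (m - s) a (C.mul (n + s) b c)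

/-- Conformal Jacobi identity together with quasi-symmetry. -/
def ConfAlg.IsLie (C : ConfAlg 𝕜) : Prop :=
  (∀ (a b c : C.A) (m n : ℕ),
    C.mul n (C.mul m a b) c =
      ∑ s ∈ Finset.range (m + 1), ((-1 : 𝕜) ^ s * (m.choose s : 𝕜)) •
        (C.mul (m - s) a (C.mul (n + s) b c) - C.mul (n + s) b (C.mul (m - s) a c))) ∧
  (∀ (a b : C.A) (n N : ℕ), (∀ s : ℕ, N ≤ s → C.mul (n + s) b a = 0) →
    C.mul n a b =
      -∑ s ∈ Finset.range N, ((-1 : 𝕜) ^ (s + n)) • C.dpow s (C.mul (n + s) b a))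

/-- Monomials in a family `f` with weights `wt`; `IsMon C f wt w v` means `w`
is a monomial (arbitrary placement of parentheses) of weight `v`. -/
inductive ConfAlg.IsMon (C : ConfAlg 𝕜) {I : Type} (f : I → C.A) (wt : I → ℕ) : C.A → ℕ → Prop
  | base (i : I) : ConfAlg.IsMon C f wt (f i) (wt i)
  | mul (n : ℕ) {a b : C.A} {wa wb : ℕ} :
      ConfAlg.IsMon C f wt a wa → ConfAlg.IsMon C f wt b wb →
      ConfAlg.IsMon C f wt (C.mul n a b) (wa + wb + n)

/-- `G` generates `C`. -/
def ConfAlg.Generates (C : ConfAlg 𝕜) (G : Set C.A) : Prop :=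
  ∀ p : Submodule 𝕜 C.A, G ⊆ ↑p → (∀ a ∈ p, C.D a ∈ p) →
    (∀ (n : ℕ) (a b : C.A), a ∈ p → b ∈ p → C.mul n a b ∈ p) → ∀ x : C.A, x ∈ p

/-- The filtration `𝔏'_i`. -/
def ConfAlg.Lp (C : ConfAlg 𝕜) {I : Type} (f : I → C.A) (wt : I → ℕ) (i : ℤ) :
    Submodule 𝕜 C.A :=
  Submodule.span 𝕜 {x : C.A | ∃ (m : ℕ) (w : C.A) (v : ℕ),
    C.IsMon f wt w v ∧ x = (C.D ^ m) w ∧ i + m ≤ (v : ℤ)}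

/-- The filtration `𝔏_i`. -/
def ConfAlg.Lf (C : ConfAlg 𝕜) {I : Type} (f : I → C.A) (wt : I → ℕ) (i : ℤ) : Set C.A :=
  {a : C.A | ∃ n : ℕ, (C.D ^ n) a ∈ C.Lp f wt (i - n)}

/-! The centralizer of `a` is a submodule closed under `D` and, by the Jacobi identity together
with quasi-symmetry, under all products; so it is everything once it contains `𝒢`. If
`D^N a ∈ 𝔏'_{r-N}` and `g ∈ 𝒢`, then `(D^N a)[l+N] g` lies in `𝔏'_{r + wt g + l} = 0`, and it is
a nonzero multiple of `a[l] g` because the characteristic is zero. -/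

namespace ConfAlg

variable (C : ConfAlg 𝕜)

/-- For `m < k` the truncated index `m - k` is harmless: the coefficient vanishes. -/
lemma mul_pow_D_left (k m : ℕ) (x y : C.A) :
    C.mul m ((C.D ^ k) x) y = ((-1) ^ k * (m.descFactorial k : 𝕜)) • C.mul (m - k) x y := by
  induction k generalizing m with
  | zero => simp
  | succ k ih =>
    rw [pow_succ', Module.End.mul_apply]
    cases m with
    | zero => simp [C.dmul_zero]
    | succ m =>
      rw [C.dmul_succ, ih, smul_smul, Nat.succ_descFactorial_succ, Nat.add_sub_add_right]
      push_cast
      ring_nf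

lemma mul_eq_zero_of_pow_D_mul_eq_zero [CharZero 𝕜] {k l : ℕ} {x y : C.A}
    (h : C.mul (l + k) ((C.D ^ k) x) y = 0) : C.mul l x y = 0 := by
  rw [mul_pow_D_left, Nat.add_sub_cancel] at h
  refine (smul_eq_zero.mp h).resolve_left (mul_ne_zero (by simp) ?_)
  exact_mod_cast (Nat.descFactorial_pos.mpr (Nat.le_add_left k l)).ne'

section Filtration

variable {I : Type} (f : I → C.A) (wt : I → ℕ)

lemma Lp_antitone : Antitone (C.Lp f wt) := fun _ _ hij =>
  Submodule.span_mono fun _ ⟨m, w, v, hw, hx, hle⟩ => ⟨m, w, v, hw, hx, by linarith⟩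

variable {C f wt}

lemma IsMon.mem_Lp {w : C.A} {v : ℕ} (h : C.IsMon f wt w v) : w ∈ C.Lp f wt v :=
  Submodule.subset_span ⟨0, w, v, h, by simp, by simp⟩

lemma Lp_eq_bot {r : ℕ} (hr : ∀ (w : C.A) (v : ℕ), C.IsMon f wt w v → r ≤ v → w = 0)
    {i : ℤ} (hi : r ≤ i) : C.Lp f wt i = ⊥ := by
  rw [eq_bot_iff, Lp, Submodule.span_le]
  rintro _ ⟨m, w, v, hw, rfl, hle⟩
  simp [hr w v hw (by omega)]

lemma mul_mem_Lp {u : C.A} {vu : ℕ} (hu : C.IsMon f wt u vu) {i : ℤ} {x : C.A}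
    (hx : x ∈ C.Lp f wt i) (m : ℕ) : C.mul m x u ∈ C.Lp f wt (i + vu + m) := by
  induction hx using Submodule.span_induction with
  | mem _ hgen =>
    obtain ⟨k, w, vw, hw, rfl, hle⟩ := hgen
    rw [mul_pow_D_left]
    by_cases hkm : k ≤ m
    · refine Submodule.smul_mem _ _ (C.Lp_antitone f wt ?_ (hw.mul (m - k) hu).mem_Lp)
      push_cast [hkm]
      linarith
    · simp [Nat.descFactorial_eq_zero_iff_lt.mpr (not_le.mp hkm)]
  | zero => simp
  | add _ _ _ _ hx hy => simpa using Submodule.add_mem _ hx hy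
  | smul c _ _ hx => simpa using Submodule.smul_mem _ c hx

end Filtration

section Centralizer

def centralizer (a : C.A) : Submodule 𝕜 C.A where
  carrier := {x | ∀ l, C.mul l a x = 0}
  add_mem' hx hy l := by simp [hx l, hy l]
  zero_mem' _ := map_zero _
  smul_mem' c _ hx l := by simp [hx l]

variable {C}

lemma D_mem_centralizer {a x : C.A} (hx : x ∈ C.centralizer a) : C.D x ∈ C.centralizer a := by
  intro l
  have hDa : C.mul l (C.D a) x = 0 := by
    cases l with
    | zero => exact C.dmul_zero a x
    | succ l => rw [C.dmul_succ, hx l, smul_zero]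
  simpa [hx l, hDa] using (C.leibniz l a x).symm

lemma IsLie.mem_centralizer_comm (hLie : C.IsLie) {a x : C.A} (hx : x ∈ C.centralizer a) :
    a ∈ C.centralizer x := fun l => by
  simpa using hLie.2 x a l 0 fun s _ => hx (l + s)

lemma IsLie.mul_mem_centralizer (hLie : C.IsLie) {a x y : C.A} (hx : x ∈ C.centralizer a)
    (hy : y ∈ C.centralizer a) (m : ℕ) : C.mul m x y ∈ C.centralizer a := by
  refine hLie.mem_centralizer_comm fun l => ?_
  rw [hLie.1]
  refine Finset.sum_eq_zero fun s _ => ?_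
  simp [hLie.mem_centralizer_comm hx (m - s), hLie.mem_centralizer_comm hy (l + s)]

lemma IsLie.centralizer_eq_top (hLie : C.IsLie) {G : Set C.A} (hgen : C.Generates G) {a : C.A}
    (hG : G ⊆ C.centralizer a) : C.centralizer a = ⊤ :=
  eq_top_iff.mpr fun x _ => hgen _ hG (fun _ => D_mem_centralizer)
    (fun m _ _ hx hy => hLie.mul_mem_centralizer hx hy m) x

end Centralizer

end ConfAlg

open ConfAlg

/-- If every monomial in `𝒢` of weight `≥ r` is zero, then `𝔏_r` is
contained in the center of `𝔏`. -/
theorem Lf_r_subset_center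
    [CharZero 𝕜] (C : ConfAlg 𝕜) (hLie : C.IsLie) (G : Set C.A) (wt : ↥G → ℕ)
    (hgen : C.Generates G) (r : ℕ)
    (hr : ∀ (w : C.A) (v : ℕ),
      C.IsMon (Subtype.val : ↥G → C.A) wt w v → r ≤ v → w = 0) :
    ∀ a ∈ C.Lf (Subtype.val : ↥G → C.A) wt (r : ℤ),
      ∀ (b : C.A) (n : ℕ), C.mul n a b = 0 := by
  rintro a ⟨N, hN⟩ b n
  have hG : G ⊆ C.centralizer a := fun g hg l => by
    have hmem := mul_mem_Lp (IsMon.base (f := Subtype.val) (wt := wt) ⟨g, hg⟩) hN (l + N)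
    rw [Lp_eq_bot hr (by push_cast; linarith)] at hmem
    exact C.mul_eq_zero_of_pow_D_mul_eq_zero ((Submodule.mem_bot 𝕜).mp hmem)
  have hb : b ∈ C.centralizer a := (hLie.centralizer_eq_top hgen hG).symm ▸ Submodule.mem_top
  exact hb n
end

section
/- Let 𝔏 be a Lie conformal algebra over a field k of characteristic zero, generated by a subset 𝒢 with weight function wt : 𝒢 → ℕ, with filtrations 𝔏'_i and 𝔏_i, and assume there is r ∈ ℕ such that every monomial in 𝒢 of weight ≥ r is zero. Set 𝔏_∞ = ∩_{i∈ℤ} 𝔏_i. Then 𝔏_∞ is a central ideal of 𝔏: D𝔏_∞ ⊆ 𝔏_∞, and for all a ∈ 𝔏_∞, b ∈ 𝔏 and n ∈ ℕ one has a[n]b = 0 and b[n]a = 0. -/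
open Finset

variable {𝕜 : Type} [Field 𝕜]

/-! A coefficient `a[n]` of an element of `𝔏_∞` is, up to a nonzero scalar, a coefficient
`(D^m a)[n+m]` of an element of `𝔏'_{r-m}`; against a monomial this only produces monomials of
weight `≥ r`, which vanish. Hence `a` annihilates every generator, and by the Jacobi identity and
quasi-symmetry the elements annihilated by `a` on both sides form a `D`-stable subalgebra. -/

namespace ConfAlg

variable (C : ConfAlg 𝕜)

lemma mul_D_pow_of_lt {q p : ℕ} (hqp : q < p) (x b : C.A) : C.mul q ((C.D ^ p) x) b = 0 := by
  induction q generalizing p with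
  | zero =>
    obtain ⟨p, rfl⟩ := Nat.exists_eq_succ_of_ne_zero hqp.ne'
    rw [pow_succ', Module.End.mul_apply]
    exact C.dmul_zero _ _
  | succ q ih =>
    obtain ⟨p, rfl⟩ := Nat.exists_eq_succ_of_ne_zero (by omega : p ≠ 0)
    rw [pow_succ', Module.End.mul_apply, C.dmul_succ, ih (by omega), smul_zero]

lemma mul_add_D_pow (n m : ℕ) (x b : C.A) :
    C.mul (n + m) ((C.D ^ m) x) b =
      ((-1 : 𝕜) ^ m * ((n + m).descFactorial m : 𝕜)) • C.mul n x b := by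
  induction m with
  | zero => simp
  | succ m ih =>
    rw [← add_assoc, pow_succ', Module.End.mul_apply, C.dmul_succ, ih, smul_smul,
      Nat.succ_descFactorial_succ]
    push_cast
    ring_nf

lemma mul_eq_zero_of_mul_add_D_pow_eq_zero [CharZero 𝕜] {n m : ℕ} {x b : C.A}
    (h : C.mul (n + m) ((C.D ^ m) x) b = 0) : C.mul n x b = 0 := by
  rw [mul_add_D_pow, smul_eq_zero] at h
  refine h.resolve_left (mul_ne_zero (pow_ne_zero _ (by norm_num)) ?_)
  exact_mod_cast (Nat.descFactorial_pos.mpr (Nat.le_add_left m n)).ne'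

section Filtration

variable {I : Type} (f : I → C.A) (wt : I → ℕ)

lemma D_mem_Lp {j : ℤ} {x : C.A} (hx : x ∈ C.Lp f wt j) : C.D x ∈ C.Lp f wt (j - 1) := by
  induction hx using Submodule.span_induction with
  | mem x hx =>
    obtain ⟨m, w, v, hw, rfl, hle⟩ := hx
    refine Submodule.subset_span ⟨m + 1, w, v, hw, ?_, by push_cast; omega⟩
    rw [pow_succ', Module.End.mul_apply]
  | zero => simp
  | add x y _ _ hx hy => rw [map_add]; exact add_mem hx hy
  | smul c x _ hx => rw [map_smul]; exact Submodule.smul_mem _ _ hx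

lemma D_mem_Lf {i : ℤ} {a : C.A} (ha : a ∈ C.Lf f wt (i + 1)) : C.D a ∈ C.Lf f wt i := by
  obtain ⟨n, hn⟩ := ha
  refine ⟨n, ?_⟩
  have hcomm : (C.D ^ n) (C.D a) = C.D ((C.D ^ n) a) := by
    rw [← Module.End.mul_apply, ← pow_succ, pow_succ', Module.End.mul_apply]
  rw [hcomm]
  convert C.D_mem_Lp f wt hn using 2
  ring

variable {f wt} {r : ℕ} (hr : ∀ (w : C.A) (v : ℕ), C.IsMon f wt w v → r ≤ v → w = 0)
include hr

lemma mul_monomial_eq_zero_of_mem_Lp {j : ℤ} {n v : ℕ} {x w : C.A} (hx : x ∈ C.Lp f wt j)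
    (hw : C.IsMon f wt w v) (hjnv : r ≤ j + n + v) : C.mul n x w = 0 := by
  induction hx using Submodule.span_induction with
  | mem x hx =>
    obtain ⟨p, u, vu, hu, rfl, hle⟩ := hx
    rcases lt_or_ge n p with hnp | hpn
    · exact C.mul_D_pow_of_lt hnp u w
    · obtain ⟨k, rfl⟩ := Nat.exists_eq_add_of_le' hpn
      rw [C.mul_add_D_pow, hr _ _ (hu.mul k hw) (by omega), smul_zero]
  | zero => simp
  | add x y _ _ hx hy => rw [map_add, LinearMap.add_apply, hx, hy, add_zero]
  | smul c x _ hx => rw [map_smul, LinearMap.smul_apply, hx, smul_zero]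

lemma mul_monomial_eq_zero_of_mem_Lf [CharZero 𝕜] {n v : ℕ} {a w : C.A}
    (ha : a ∈ C.Lf f wt r) (hw : C.IsMon f wt w v) : C.mul n a w = 0 := by
  obtain ⟨m, hm⟩ := ha
  exact C.mul_eq_zero_of_mul_add_D_pow_eq_zero
    (C.mul_monomial_eq_zero_of_mem_Lp hr hm hw (by omega))

end Filtration

def annihilator (a : C.A) : Submodule 𝕜 C.A :=
  ⨅ k : ℕ, LinearMap.ker (C.mul k a) ⊓ LinearMap.ker ((C.mul k).flip a)

variable {C}

lemma mem_annihilator {a x : C.A} :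
    x ∈ C.annihilator a ↔ ∀ k : ℕ, C.mul k a x = 0 ∧ C.mul k x a = 0 := by
  simp only [annihilator, Submodule.mem_iInf, Submodule.mem_inf, LinearMap.mem_ker,
    LinearMap.flip_apply]

lemma D_mem_annihilator {a x : C.A} (hx : x ∈ C.annihilator a) :
    C.D x ∈ C.annihilator a := by
  rw [mem_annihilator] at hx ⊢
  refine fun k => ⟨?_, ?_⟩
  · have hDa : C.mul k (C.D a) x = 0 := by
      cases k with
      | zero => exact C.dmul_zero a x
      | succ k => rw [C.dmul_succ, (hx k).1, smul_zero]
    have hl := C.leibniz k a x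
    rwa [(hx k).1, map_zero, hDa, zero_add, eq_comm] at hl
  · cases k with
    | zero => exact C.dmul_zero x a
    | succ k => rw [C.dmul_succ, (hx k).2, smul_zero]

namespace IsLie

variable (hC : C.IsLie)
include hC

lemma mul_swap_eq_zero {a b : C.A} (h : ∀ k : ℕ, C.mul k a b = 0) (n : ℕ) :
    C.mul n b a = 0 := by
  rw [hC.2 b a n 0 fun s _ => h (n + s)]
  simp

lemma mul_mem_annihilator {a x y : C.A} (hx : x ∈ C.annihilator a)
    (hy : y ∈ C.annihilator a) (k : ℕ) : C.mul k x y ∈ C.annihilator a := by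
  rw [mem_annihilator] at hx hy
  have hright : ∀ j : ℕ, C.mul j (C.mul k x y) a = 0 := fun j => by
    rw [hC.1]
    refine Finset.sum_eq_zero fun s _ => ?_
    rw [(hy (j + s)).2, map_zero, (hx (k - s)).2, map_zero, sub_zero, smul_zero]
  exact mem_annihilator.mpr fun j => ⟨hC.mul_swap_eq_zero hright j, hright j⟩

lemma annihilator_eq_top_of_generates {a : C.A} {G : Set C.A} (hgen : C.Generates G)
    (hG : ∀ g ∈ G, ∀ k : ℕ, C.mul k a g = 0) : C.annihilator a = ⊤ :=
  Submodule.eq_top_iff'.mpr <| hgen _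
    (fun g hg => mem_annihilator.mpr fun k => ⟨hG g hg k, hC.mul_swap_eq_zero (hG g hg) k⟩)
    (fun _ => D_mem_annihilator) (fun k _ _ hx hy => hC.mul_mem_annihilator hx hy k)

end IsLie

end ConfAlg

/-- `𝔏_∞ = ∩_i 𝔏_i` is a central ideal of `𝔏`: it is `D`-invariant and
annihilates `𝔏` on both sides. -/
theorem Lf_inf_central_ideal
    [CharZero 𝕜] (C : ConfAlg 𝕜) (hLie : C.IsLie) (G : Set C.A) (wt : ↥G → ℕ)
    (hgen : C.Generates G) (r : ℕ)
    (hr : ∀ (w : C.A) (v : ℕ),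
      C.IsMon (Subtype.val : ↥G → C.A) wt w v → r ≤ v → w = 0) :
    (∀ a : C.A, (∀ i : ℤ, a ∈ C.Lf (Subtype.val : ↥G → C.A) wt i) →
        ∀ i : ℤ, C.D a ∈ C.Lf (Subtype.val : ↥G → C.A) wt i) ∧
    (∀ a : C.A, (∀ i : ℤ, a ∈ C.Lf (Subtype.val : ↥G → C.A) wt i) →
        ∀ (b : C.A) (n : ℕ), C.mul n a b = 0 ∧ C.mul n b a = 0) := by
  refine ⟨fun a ha i => C.D_mem_Lf _ wt (ha (i + 1)), fun a ha b n => ?_⟩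
  have hann : C.annihilator a = ⊤ := hLie.annihilator_eq_top_of_generates hgen fun g hg _ =>
    C.mul_monomial_eq_zero_of_mem_Lf hr (ha r) (ConfAlg.IsMon.base (⟨g, hg⟩ : G))
  exact ConfAlg.mem_annihilator.mp (hann ▸ Submodule.mem_top) n
end
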